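/- Let n ≥ 1 be odd and write 2n×2n complex matrices in 2×2 block form with n×n blocks. For A = (a, b; c, d) ∈ SL(2,ℂ) let ι(A) = (a•Iₙ, b•Iₙ; c•Iₙ, d•Iₙ). Then for every A ∈ SL(2,ℂ): w₂ₙ * (ι(A)ᵀ)⁻¹ * w₂ₙ⁻¹ = ι(A). -/
import Mathlib


open Matrix

/-- The `n × n` complex antidiagonal sign matrix `wₙ` of equation (5.2). -/
noncomputable def w (n : ℕ) : Matrix (Fin n) (Fin n) ℂ :=
  Matrix.of fun i j => if (i : ℕ) + (j : ℕ) + 1 = n then (-1 : ℂ) ^ (i : ℕ) else 0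

/-- The order-preserving identification of `Fin n ⊕ Fin n` with `Fin (2 * n)`. -/
def esum (n : ℕ) : (Fin n ⊕ Fin n) ≃ Fin (2 * n) :=
  finSumFinEquiv.trans (finCongr (two_mul n).symm)

/-- `w (2*n)` transported to 2×2 block form with `n × n` blocks. -/
noncomputable def wb (n : ℕ) : Matrix (Fin n ⊕ Fin n) (Fin n ⊕ Fin n) ℂ :=
  Matrix.reindex (esum n).symm (esum n).symm (w (2 * n))

/-- For `A = (a, b; c, d)`, `ι(A)` is the block matrix `(a•Iₙ, b•Iₙ; c•Iₙ, d•Iₙ)`. -/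
noncomputable def iota (n : ℕ) (A : Matrix (Fin 2) (Fin 2) ℂ) :
    Matrix (Fin n ⊕ Fin n) (Fin n ⊕ Fin n) ℂ :=
  Matrix.fromBlocks (A 0 0 • 1) (A 0 1 • 1) (A 1 0 • 1) (A 1 1 • 1)

lemma w_mul_w {n : ℕ} (hn : Odd n) : w n * w n = 1 := by
  have hn1 : 1 ≤ n := hn.pos
  ext i j
  rw [Matrix.mul_apply]
  have hi : (i : ℕ) < n := i.2
  set k0 : Fin n := ⟨n - 1 - (i : ℕ), by omega⟩ with hk0def
  have hk0 : (k0 : ℕ) = n - 1 - (i : ℕ) := rfl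
  rw [Finset.sum_eq_single k0]
  · simp only [w, Matrix.of_apply, Matrix.one_apply]
    rw [if_pos (by omega)]
    by_cases hij : i = j
    · subst hij
      rw [if_pos (by omega), if_pos rfl, ← pow_add]
      have h1 : (i : ℕ) + (k0 : ℕ) = n - 1 := by omega
      rw [h1]
      have h2 : Even (n - 1) := by
        rcases hn with ⟨m, hm⟩
        exact ⟨m, by omega⟩
      simp [h2.neg_one_pow]
    · rw [if_neg, if_neg]
      · simp
      · exact hij
      · intro h
        exact hij (Fin.ext (by omega))
  · intro k _ hk
    simp only [w, Matrix.of_apply]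
    rw [if_neg, zero_mul]
    intro h
    exact hk (Fin.ext (by omega))
  · intro h
    exact absurd (Finset.mem_univ _) h

lemma wb_eq {n : ℕ} (hn : Odd n) :
    wb n = Matrix.fromBlocks 0 (w n) (-(w n)) 0 := by
  ext x y
  have he : ∀ z : Fin n ⊕ Fin n, ((esum n z : Fin (2*n)) : ℕ) =
      Sum.elim (fun i : Fin n => (i : ℕ)) (fun i : Fin n => n + (i : ℕ)) z := by
    rintro (i | i) <;> simp [esum] <;> omega
  rcases x with i | i <;> rcases y with j | j <;>
    simp only [wb, Matrix.reindex_apply, Matrix.submatrix_apply, Equiv.symm_symm, w,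
      Matrix.of_apply, he, Sum.elim_inl, Sum.elim_inr, Matrix.fromBlocks_apply₁₁,
      Matrix.fromBlocks_apply₁₂, Matrix.fromBlocks_apply₂₁, Matrix.fromBlocks_apply₂₂,
      Matrix.zero_apply, Matrix.neg_apply]
  · rw [if_neg (by omega)]
  · by_cases h : (i : ℕ) + (j : ℕ) + 1 = n
    · rw [if_pos (by omega), if_pos h]
    · rw [if_neg (by omega), if_neg h]
  · by_cases h : (i : ℕ) + (j : ℕ) + 1 = n
    · rw [if_pos (by omega), if_pos h, pow_add, hn.neg_one_pow]
      ring
    · rw [if_neg (by omega), if_neg h, neg_zero]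
  · rw [if_neg (by omega)]

theorem stmt4 (n : ℕ) (hn : Odd n) (A : Matrix (Fin 2) (Fin 2) ℂ) (hA : A.det = 1) :
    wb n * ((iota n A)ᵀ)⁻¹ * (wb n)⁻¹ = iota n A := by
  have hdet : A 0 0 * A 1 1 - A 0 1 * A 1 0 = 1 := by
    rwa [Matrix.det_fin_two] at hA
  have hW := w_mul_w hn
  have hwb := wb_eq hn
  have hwbinv : (wb n)⁻¹ = Matrix.fromBlocks 0 (-(w n)) (w n) 0 := by
    apply Matrix.inv_eq_right_inv
    rw [hwb, Matrix.fromBlocks_multiply]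
    simp [hW, Matrix.fromBlocks_one]
  have hiotainv : ((iota n A)ᵀ)⁻¹ =
      Matrix.fromBlocks (A 1 1 • 1) (-(A 1 0) • (1 : Matrix (Fin n) (Fin n) ℂ))
        (-(A 0 1) • 1) (A 0 0 • 1) := by
    apply Matrix.inv_eq_right_inv
    rw [iota, Matrix.fromBlocks_transpose, Matrix.fromBlocks_multiply]
    simp only [Matrix.transpose_smul, Matrix.transpose_one, Matrix.smul_mul, Matrix.mul_smul,
      Matrix.one_mul, smul_smul, ← add_smul, ← Matrix.fromBlocks_one]
    rw [show A 1 1 * A 0 0 + -A 0 1 * A 1 0 = 1 by linear_combination hdet,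
      show -A 1 0 * A 0 0 + A 0 0 * A 1 0 = 0 by ring,
      show A 1 1 * A 0 1 + -A 0 1 * A 1 1 = 0 by ring,
      show -A 1 0 * A 0 1 + A 0 0 * A 1 1 = 1 by linear_combination hdet]
    simp
  rw [hwbinv, hiotainv, hwb, iota, Matrix.fromBlocks_multiply, Matrix.fromBlocks_multiply]
  simp only [Matrix.zero_mul, Matrix.mul_zero, zero_add, add_zero, Matrix.mul_smul,
    Matrix.smul_mul, Matrix.mul_one, Matrix.one_mul, smul_zero, neg_zero, Matrix.neg_mul,
    Matrix.mul_neg, neg_neg, smul_neg, neg_smul, hW]
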